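/- Let ℋ be a real separable Hilbert space with orthonormal basis (E_j)_{j≥1}, and let 𝔠 be a bounded linear operator on ℋ with 𝔠 E_j = Λ_j E_j for real eigenvalues Λ_j satisfying Λ_j → 0. Let (J_n)_{n≥1} be nested finite subsets of ℕ with ⋃_n J_n = ℕ, Π_n the orthogonal projection onto span{E_j : j ∈ J_n}, and 𝔠ⁿ = Π_n 𝔠 Π_n. Let λ, T > 0, let (τ_i)_{i≥1} be strictly increasing positive random times with N(t) = #{i : τ_i ≤ t} finite a.s. and N(T) Poisson-distributed with parameter λT, let (X_i)_{i≥1} be i.i.d. ℋ-valued random variables independent of N(T) with E[‖X₁‖²] < ∞, and let V₀ satisfy E[‖V₀‖²] < ∞. Define V(t) = exp(t𝔠)V₀ + ∑_{i : τ_i ≤ t} exp((t − τ_i)𝔠) X_i and Vⁿ(t) = exp(t𝔠ⁿ)V₀ + ∑_{i : τ_i ≤ t} exp((t − τ_i)𝔠ⁿ) X_i. Then E[ sup_{0 ≤ t ≤ T} ‖V(t) − Vⁿ(t)‖² ] ≤ C(T) · sup_{m ∉ J_n} Λ_m², where C(T) = 4T² e^{2T‖𝔠‖_op} ( E[‖V₀‖²]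 + λT E[‖X₁‖²] + λ²T² (E[‖X₁‖])² ), and the right-hand side converges to 0 as n → ∞. -/

import Mathlib

/-!
Both `𝔠` and `𝔠ⁿ = Πₙ 𝔠 Πₙ` are diagonal in the basis `(E_j)`, so `exp(s𝔠) − exp(s𝔠ⁿ)` is
diagonal with eigenvalues `e^{sΛ_j} − 1` for `j ∉ Jₙ` and `0` otherwise, and for `|s| ≤ T` its
norm is at most `M = T · sup_{m ∉ Jₙ} |Λ_m| · e^{T‖𝔠‖}`. For `t ≤ T` every shift `t − τ_i`
occurring in `V(t)` lies in `[0, T]`, so pathwise `‖V(t) − Vⁿ(t)‖ ≤ M (‖V₀‖ + S)` with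
`S = ∑_{i < N(T)} ‖X_i‖`. Conditioning on `N(T) = k`, which is independent of the jumps,
`E[S²] = ∑_k P(N(T) = k) (k E‖X₁‖² + k(k−1) (E‖X₁‖)²) = λT E‖X₁‖² + (λT)² (E‖X₁‖)²`
by the factorial moments `E[N(N−1)⋯(N−j+1)] = (λT)^j` of the Poisson law.
-/

open MeasureTheory ProbabilityTheory Finset
open scoped InnerProductSpace Nat ENNReal

theorem Real.abs_exp_sub_exp_le (x y : ℝ) :
    |Real.exp x - Real.exp y| ≤ |x - y| * Real.exp (max x y) := by
  wlog hyx : y ≤ x generalizing x y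
  · simpa [abs_sub_comm, max_comm] using this y x (le_of_not_ge hyx)
  have hexp : Real.exp x * (1 + (y - x)) ≤ Real.exp y := by
    have := mul_le_mul_of_nonneg_left (Real.add_one_le_exp (y - x)) (Real.exp_pos x).le
    rwa [← Real.exp_add, add_sub_cancel, add_comm (y - x)] at this
  rw [abs_of_nonneg (sub_nonneg.2 (Real.exp_le_exp.2 hyx)), abs_of_nonneg (sub_nonneg.2 hyx),
    max_eq_left hyx]
  nlinarith

theorem exp_smul_apply_of_apply_eq_smul {E : Type*} [NormedAddCommGroup E] [NormedSpace ℝ E]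
    [CompleteSpace E] {c : E →L[ℝ] E} {x : E} {l : ℝ} (hx : c x = l • x) (s : ℝ) :
    NormedSpace.exp (s • c) x = Real.exp (s * l) • x := by
  have hpow : ∀ n : ℕ, ((s • c) ^ n) x = (s * l) ^ n • x := by
    intro n
    induction n with
    | zero => simp
    | succ n ih => rw [pow_succ', mul_apply_eq_comp, ih, map_smul, smul_apply, hx, smul_smul,
        smul_smul, pow_succ, ← mul_assoc]
  have hlhs := (NormedSpace.exp_series_hasSum_exp' (𝕂 := ℝ) (s • c)).mapL
    (ContinuousLinearMap.apply ℝ E x)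
  have hrhs := (NormedSpace.exp_series_hasSum_exp' (𝕂 := ℝ) (s * l)).smul_const x
  rw [← Real.exp_eq_exp_ℝ] at hrhs
  refine hlhs.unique (hrhs.congr_fun fun n => ?_)
  rw [ContinuousLinearMap.apply_apply, smul_apply, hpow, smul_smul, smul_eq_mul]

theorem HilbertBasis.repr_apply_of_apply_eq_smul {ι 𝕜 E : Type*} [RCLike 𝕜]
    [NormedAddCommGroup E] [InnerProductSpace 𝕜 E] (b : HilbertBasis ι 𝕜 E) {D : E →L[𝕜] E}
    {d : ι → 𝕜} (hD : ∀ j, D (b j) = d j • b j) (x : E) (i : ι) :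
    b.repr (D x) i = d i * b.repr x i := by
  classical
  have hDx : HasSum (fun j => (b.repr x j * d j) • b j) (D x) := by
    convert (b.hasSum_repr x).mapL D using 2 with j
    rw [map_smul, hD, smul_smul]
  have hcoord := hDx.mapL (innerSL 𝕜 (b i))
  have hterm : ∀ j, innerSL 𝕜 (b i) ((b.repr x j * d j) • b j)
      = if j = i then b.repr x i * d i else 0 := by
    intro j
    rw [innerSL_apply_apply, inner_smul_right, orthonormal_iff_ite.mp b.orthonormal]
    rcases eq_or_ne j i with rfl | h
    · rw [if_pos rfl, if_pos rfl, mul_one]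
    · rw [if_neg h.symm, if_neg h, mul_zero]
  have := (hcoord.congr_fun fun j => (hterm j).symm).unique (hasSum_ite_eq i _)
  rw [innerSL_apply_apply, ← b.repr_apply_apply] at this
  rw [this, mul_comm]

theorem HilbertBasis.opNorm_le_of_apply_eq_smul {ι 𝕜 E : Type*} [RCLike 𝕜]
    [NormedAddCommGroup E] [InnerProductSpace 𝕜 E] (b : HilbertBasis ι 𝕜 E) {D : E →L[𝕜] E}
    {d : ι → 𝕜} (hD : ∀ j, D (b j) = d j • b j) {M : ℝ} (hM : 0 ≤ M) (hd : ∀ j, ‖d j‖ ≤ M) :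
    ‖D‖ ≤ M := by
  refine D.opNorm_le_bound hM fun x => ?_
  calc ‖D x‖ = ‖b.repr (D x)‖ := (b.repr.norm_map _).symm
    _ ≤ ‖(M : 𝕜) • b.repr x‖ := lp.norm_mono two_ne_zero fun i => by
        rw [b.repr_apply_of_apply_eq_smul hD, lp.coeFn_smul, Pi.smul_apply, norm_mul, norm_smul,
          RCLike.norm_ofReal, abs_of_nonneg hM]
        exact mul_le_mul_of_nonneg_right (hd i) (norm_nonneg _)
    _ = M * ‖x‖ := by rw [norm_smul, RCLike.norm_ofReal, abs_of_nonneg hM, b.repr.norm_map]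

theorem HilbertBasis.norm_exp_smul_sub_exp_smul_le {ι E : Type*} [NormedAddCommGroup E]
    [InnerProductSpace ℝ E] [CompleteSpace E] (b : HilbertBasis ι ℝ E) {c c' : E →L[ℝ] E}
    {Λ Λ' : ι → ℝ} (hc : ∀ j, c (b j) = Λ j • b j) (hc' : ∀ j, c' (b j) = Λ' j • b j)
    {R δ : ℝ} (hΛ : ∀ j, |Λ j| ≤ R) (hΛ' : ∀ j, |Λ' j| ≤ R) (hδ₀ : 0 ≤ δ)
    (hδ : ∀ j, |Λ j - Λ' j| ≤ δ) (s : ℝ) :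
    ‖NormedSpace.exp (s • c) - NormedSpace.exp (s • c')‖ ≤ |s| * δ * Real.exp (|s| * R) := by
  refine b.opNorm_le_of_apply_eq_smul (d := fun j => Real.exp (s * Λ j) - Real.exp (s * Λ' j))
    (fun j => ?_) (by positivity) fun j => ?_
  · rw [sub_apply, exp_smul_apply_of_apply_eq_smul (hc j),
      exp_smul_apply_of_apply_eq_smul (hc' j), sub_smul]
  · have hmul : ∀ l, |l| ≤ R → s * l ≤ |s| * R := fun l hl =>
      (le_abs_self _).trans (abs_mul s l ▸ mul_le_mul_of_nonneg_left hl (abs_nonneg s))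
    calc ‖Real.exp (s * Λ j) - Real.exp (s * Λ' j)‖
        ≤ |s * Λ j - s * Λ' j| * Real.exp (max (s * Λ j) (s * Λ' j)) :=
          Real.abs_exp_sub_exp_le _ _
      _ ≤ |s| * δ * Real.exp (|s| * R) := by
          rw [← mul_sub, abs_mul]
          gcongr
          · exact hδ j
          · exact max_le (hmul _ (hΛ j)) (hmul _ (hΛ' j))

theorem HilbertBasis.apply_eq_ite_of_eq_sum {ι 𝕜 E : Type*} [DecidableEq ι] [RCLike 𝕜]
    [NormedAddCommGroup E] [InnerProductSpace 𝕜 E] (b : HilbertBasis ι 𝕜 E) (s : Finset ι)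
    {P : E → E} (hP : ∀ x, P x = ∑ j ∈ s, ⟪x, b j⟫_𝕜 • b j) (i : ι) :
    P (b i) = if i ∈ s then b i else 0 := by
  simp_rw [hP, orthonormal_iff_ite.mp b.orthonormal i, ite_smul, one_smul, zero_smul,
    sum_ite_eq]

theorem abs_le_opNorm_of_apply_eq_smul {E : Type*} [NormedAddCommGroup E] [NormedSpace ℝ E]
    {c : E →L[ℝ] E} {x : E} (hx : ‖x‖ = 1) {l : ℝ} (hcx : c x = l • x) : |l| ≤ ‖c‖ := by
  simpa [hcx, norm_smul, hx] using c.le_opNorm x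

theorem HilbertBasis.norm_exp_smul_sub_exp_smul_compress_le {ι E : Type*} [DecidableEq ι]
    [NormedAddCommGroup E] [InnerProductSpace ℝ E] [CompleteSpace E] (b : HilbertBasis ι ℝ E)
    {c : E →L[ℝ] E} {Λ : ι → ℝ} (hc : ∀ j, c (b j) = Λ j • b j) (s : Finset ι)
    {P : E →L[ℝ] E} (hP : ∀ x, P x = ∑ j ∈ s, ⟪x, b j⟫_ℝ • b j) (t : ℝ) :
    ‖NormedSpace.exp (t • c) - NormedSpace.exp (t • (P ∘L c ∘L P))‖
      ≤ |t| * √(⨆ m : {m // m ∉ s}, Λ m ^ 2) * Real.exp (|t| * ‖c‖) := by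
  have hΛ : ∀ j, |Λ j| ≤ ‖c‖ := fun j => abs_le_opNorm_of_apply_eq_smul (b.orthonormal.1 j) (hc j)
  have hPb := b.apply_eq_ite_of_eq_sum s hP
  have hcomp : ∀ j, (P ∘L c ∘L P) (b j) = (if j ∈ s then Λ j else 0) • b j := fun j => by
    by_cases hj : j ∈ s <;> simp [hPb, hj, hc]
  have hbdd : BddAbove (Set.range fun m : {m // m ∉ s} => Λ m ^ 2) :=
    ⟨‖c‖ ^ 2, Set.forall_mem_range.2 fun m => sq_le_sq' (abs_le.1 (hΛ m)).1 (abs_le.1 (hΛ m)).2⟩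
  refine b.norm_exp_smul_sub_exp_smul_le hc hcomp hΛ (fun j => ?_) (Real.sqrt_nonneg _)
    (fun j => ?_) t
  · split_ifs
    · exact hΛ j
    · simp
  · split_ifs with hj
    · simp
    · simpa using Real.abs_le_sqrt (le_ciSup hbdd ⟨j, hj⟩)

theorem IsLowerSet.eq_Iio_ncard {s : Set ℕ} (hl : IsLowerSet s) (hs : s.Finite) :
    s = Set.Iio s.ncard := by
  obtain h | ⟨a, rfl⟩ := hl.eq_univ_or_Iio
  · exact absurd (h ▸ hs) Set.infinite_univ
  · rw [Set.ncard_Iio_nat]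

/-- For increasing `τ` with finitely many `τ i ≤ t`, the sum runs over exactly those `i`. -/
noncomputable def shotNoise {E : Type*} [NormedAddCommGroup E] [NormedSpace ℝ E]
    (A : ℝ → E →L[ℝ] E) (τ : ℕ → ℝ) (v : E) (x : ℕ → E) (t : ℝ) : E :=
  A t v + ∑ i ∈ range {i | τ i ≤ t}.ncard, A (t - τ i) (x i)

theorem norm_shotNoise_sub_shotNoise_le {E : Type*} [NormedAddCommGroup E] [NormedSpace ℝ E]
    {A B : ℝ → E →L[ℝ] E} {T M : ℝ} (hAB : ∀ s ∈ Set.Icc 0 T, ‖A s - B s‖ ≤ M)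
    {τ : ℕ → ℝ} (hτpos : ∀ i, 0 < τ i) (hτ : Monotone τ) (hfin : {i | τ i ≤ T}.Finite)
    {t : ℝ} (ht : t ∈ Set.Icc 0 T) (v : E) (x : ℕ → E) :
    ‖shotNoise A τ v x t - shotNoise B τ v x t‖
      ≤ M * (‖v‖ + ∑ i ∈ range {i | τ i ≤ T}.ncard, ‖x i‖) := by
  have hsub : {i | τ i ≤ t} ⊆ {i | τ i ≤ T} := fun i hi => le_trans hi ht.2
  have hlower : IsLowerSet {i | τ i ≤ t} := fun i j hji hi => le_trans (hτ hji) hi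
  have hτt : ∀ i ∈ range {i | τ i ≤ t}.ncard, t - τ i ∈ Set.Icc 0 T := fun i hi => by
    have hτi : τ i ≤ t := by
      rw [mem_range, ← Set.mem_Iio, ← hlower.eq_Iio_ncard (hfin.subset hsub)] at hi
      exact hi
    constructor <;> linarith [hτpos i, ht.2]
  have hM : 0 ≤ M := (norm_nonneg _).trans (hAB 0 ⟨le_rfl, ht.1.trans ht.2⟩)
  calc _ = ‖(A t - B t) v
          + ∑ i ∈ range {i | τ i ≤ t}.ncard, (A (t - τ i) - B (t - τ i)) (x i)‖ := by
        simp only [shotNoise, sub_apply, sum_sub_distrib]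
        abel_nf
    _ ≤ M * ‖v‖ + ∑ i ∈ range {i | τ i ≤ t}.ncard, M * ‖x i‖ := by
        refine (norm_add_le _ _).trans (add_le_add ((A t - B t).le_of_opNorm_le (hAB t ht) v)
          ((norm_sum_le _ _).trans (sum_le_sum fun i hi => ?_)))
        exact (A (t - τ i) - B (t - τ i)).le_of_opNorm_le (hAB _ (hτt i hi)) (x i)
    _ ≤ M * ‖v‖ + ∑ i ∈ range {i | τ i ≤ T}.ncard, M * ‖x i‖ := by
        gcongr
    _ = M * (‖v‖ + ∑ i ∈ range {i | τ i ≤ T}.ncard, ‖x i‖) := by rw [mul_add, mul_sum]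

theorem integral_iSup_sq_norm_le {Ω ι E : Type*} [MeasurableSpace Ω] {μ : Measure Ω} [Nonempty ι]
    [NormedAddCommGroup E] {W : ι → Ω → E} {U S : Ω → ℝ} {M : ℝ}
    (hU : Integrable (fun ω => U ω ^ 2) μ) (hS : Integrable (fun ω => S ω ^ 2) μ)
    (hW : ∀ᵐ ω ∂μ, ∀ t, ‖W t ω‖ ≤ M * (U ω + S ω)) :
    ∫ ω, ⨆ t, ‖W t ω‖ ^ 2 ∂μ ≤ 2 * M ^ 2 * ((∫ ω, U ω ^ 2 ∂μ) + ∫ ω, S ω ^ 2 ∂μ) := by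
  have hpt : ∀ᵐ ω ∂μ, ⨆ t, ‖W t ω‖ ^ 2 ≤ 2 * M ^ 2 * (U ω ^ 2 + S ω ^ 2) := by
    filter_upwards [hW] with ω hω
    refine ciSup_le fun t => ?_
    calc ‖W t ω‖ ^ 2 ≤ (M * (U ω + S ω)) ^ 2 := pow_le_pow_left₀ (norm_nonneg _) (hω t) 2
      _ ≤ 2 * M ^ 2 * (U ω ^ 2 + S ω ^ 2) := by nlinarith [sq_nonneg (M * (U ω - S ω))]
  calc ∫ ω, ⨆ t, ‖W t ω‖ ^ 2 ∂μ ≤ ∫ ω, 2 * M ^ 2 * (U ω ^ 2 + S ω ^ 2) ∂μ :=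
        integral_mono_of_nonneg (ae_of_all _ fun ω => Real.iSup_nonneg fun t => sq_nonneg _)
          ((hU.add hS).const_mul _) hpt
    _ = 2 * M ^ 2 * ((∫ ω, U ω ^ 2 ∂μ) + ∫ ω, S ω ^ 2 ∂μ) := by
        rw [integral_const_mul, integral_add hU hS]

theorem integral_iSup_sq_norm_shotNoise_sub_le {Ω E : Type*} [MeasurableSpace Ω]
    {μ : Measure Ω} [NormedAddCommGroup E] [NormedSpace ℝ E] {A B : ℝ → E →L[ℝ] E} {T M : ℝ}
    (hT : 0 ≤ T) (hAB : ∀ s ∈ Set.Icc 0 T, ‖A s - B s‖ ≤ M) {τ : ℕ → Ω → ℝ}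
    (hτpos : ∀ i ω, 0 < τ i ω) (hτ : ∀ ω, Monotone (τ · ω))
    (hfin : ∀ᵐ ω ∂μ, {i | τ i ω ≤ T}.Finite) {v : Ω → E} {x : ℕ → Ω → E}
    (hv : Integrable (fun ω => ‖v ω‖ ^ 2) μ)
    (hx : Integrable (fun ω => (∑ i ∈ range {i | τ i ω ≤ T}.ncard, ‖x i ω‖) ^ 2) μ) :
    ∫ ω, ⨆ t : Set.Icc 0 T,
        ‖shotNoise A (τ · ω) (v ω) (x · ω) t - shotNoise B (τ · ω) (v ω) (x · ω) t‖ ^ 2 ∂μ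
      ≤ 2 * M ^ 2 * ((∫ ω, ‖v ω‖ ^ 2 ∂μ)
        + ∫ ω, (∑ i ∈ range {i | τ i ω ≤ T}.ncard, ‖x i ω‖) ^ 2 ∂μ) :=
  have : Nonempty (Set.Icc 0 T) := ⟨⟨0, le_rfl, hT⟩⟩
  integral_iSup_sq_norm_le hv hx <| hfin.mono fun ω hω t =>
    norm_shotNoise_sub_shotNoise_le hAB (hτpos · ω) (hτ ω) hω t.2 _ _

theorem measurable_ncard_setOf_le {Ω : Type*} [MeasurableSpace Ω] {τ : ℕ → Ω → ℝ}
    (hτ : ∀ i, Measurable (τ i)) (t : ℝ) : Measurable fun ω => {i | τ i ω ≤ t}.ncard :=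
  measurable_ncard.comp <| measurable_set_iff.2 fun i =>
    measurableSet_setOfPred.1 (measurableSet_le (hτ i) measurable_const)

theorem hasSum_descFactorial_mul_poisson (m : ℝ) (j : ℕ) :
    HasSum (fun k : ℕ => (k.descFactorial j : ℝ) * (Real.exp (-m) * m ^ k / k !)) (m ^ j) := by
  have hexp : HasSum (fun k : ℕ => m ^ k / k !) (Real.exp m) := by
    rw [Real.exp_eq_exp_ℝ]; exact NormedSpace.expSeries_div_hasSum_exp m
  have hshift : HasSum (fun k : ℕ => ((k + j).descFactorial j : ℝ)
      * (Real.exp (-m) * m ^ (k + j) / (k + j)!)) (m ^ j) := by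
    have h := hexp.mul_left (m ^ j * Real.exp (-m))
    rw [mul_assoc, ← Real.exp_add, neg_add_cancel, Real.exp_zero, mul_one] at h
    refine h.congr_fun fun k => ?_
    have hfac : ((k + j)! : ℝ) = k ! * (k + j).descFactorial j := by
      rw [← Nat.cast_mul, ← Nat.factorial_mul_descFactorial (Nat.le_add_left j k),
        Nat.add_sub_cancel]
    have : (k ! : ℝ) ≠ 0 := by positivity
    have : ((k + j).descFactorial j : ℝ) ≠ 0 :=
      Nat.cast_ne_zero.2 (Nat.descFactorial_eq_zero_iff_lt.not.2 (by omega))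
    rw [hfac, pow_add]
    field_simp
  have hlow : ∑ k ∈ range j, (k.descFactorial j : ℝ) * (Real.exp (-m) * m ^ k / k !) = 0 :=
    sum_eq_zero fun k hk => by
      rw [Nat.descFactorial_eq_zero_iff_lt.2 (mem_range.1 hk), Nat.cast_zero, zero_mul]
  have h := (hasSum_nat_add_iff (f := fun k : ℕ =>
    (k.descFactorial j : ℝ) * (Real.exp (-m) * m ^ k / k !)) j).1 hshift
  rwa [hlow, add_zero] at h

theorem integral_sq_sum_range_of_identDistrib {Ω : Type*} [MeasurableSpace Ω] {μ : Measure Ω}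
    [IsProbabilityMeasure μ] {Y : ℕ → Ω → ℝ}
    (hY : Pairwise fun i j => IndepFun (Y i) (Y j) μ) (hid : ∀ i, IdentDistrib (Y i) (Y 0) μ μ)
    (h2 : MemLp (Y 0) 2 μ) (k : ℕ) :
    ∫ ω, (∑ i ∈ range k, Y i ω) ^ 2 ∂μ
      = k * ∫ ω, Y 0 ω ^ 2 ∂μ + k.descFactorial 2 * (∫ ω, Y 0 ω ∂μ) ^ 2 := by
  have hmem : ∀ i, MemLp (Y i) 2 μ := fun i => (hid i).symm.memLp_snd h2
  have hvar : Var[∑ i ∈ range k, Y i; μ] = k * Var[Y 0; μ] := by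
    rw [IndepFun.variance_sum (fun i _ => hmem i) fun i _ j _ hij => hY hij]
    simp [fun i => (hid i).variance_eq]
  have hmean : ∫ ω, ∑ i ∈ range k, Y i ω ∂μ = k * ∫ ω, Y 0 ω ∂μ := by
    rw [integral_finsetSum _ fun i _ => (hmem i).integrable one_le_two]
    simp [fun i => (hid i).integral_eq]
  rw [variance_eq_sub (memLp_finsetSum' _ fun i _ => hmem i), variance_eq_sub h2] at hvar
  simp only [Pi.pow_apply, Finset.sum_apply, hmean] at hvar
  rw [Nat.cast_descFactorial_two]
  linear_combination hvar

theorem lintegral_eval_eq_tsum_of_indep {Ω : Type*} {m₂ mΩ : MeasurableSpace Ω} {μ : Measure Ω}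
    {N : Ω → ℕ} (hN : Measurable N)
    (hm₂ : m₂ ≤ mΩ) (hind : Indep (MeasurableSpace.comap N inferInstance) m₂ μ)
    {G : ℕ → Ω → ℝ≥0∞} (hG : ∀ k, Measurable[m₂] (G k)) :
    ∫⁻ ω, G (N ω) ω ∂μ = ∑' k, μ (N ⁻¹' {k}) * ∫⁻ ω, G k ω ∂μ := by
  have hind_meas : ∀ k, Measurable[MeasurableSpace.comap N inferInstance]
      ((N ⁻¹' {k}).indicator (1 : Ω → ℝ≥0∞)) := fun k =>
    (Measurable.of_discrete (f := ({k} : Set ℕ).indicator 1)).comp (comap_measurable N)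
  have hpt : ∀ ω, G (N ω) ω = ∑' k, (N ⁻¹' {k}).indicator 1 ω * G k ω := fun ω => by
    rw [tsum_eq_single (N ω) fun k hk => by simp [Ne.symm hk]]
    simp
  calc ∫⁻ ω, G (N ω) ω ∂μ = ∫⁻ ω, ∑' k, (N ⁻¹' {k}).indicator 1 ω * G k ω ∂μ :=
        lintegral_congr hpt
    _ = ∑' k, ∫⁻ ω, (N ⁻¹' {k}).indicator 1 ω * G k ω ∂μ :=
        lintegral_tsum fun k =>
          (((hind_meas k).mono hN.comap_le le_rfl).mul ((hG k).mono hm₂ le_rfl)).aemeasurable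
    _ = ∑' k, μ (N ⁻¹' {k}) * ∫⁻ ω, G k ω ∂μ := by
        congr 1 with k
        rw [lintegral_mul_eq_lintegral_mul_lintegral_of_independent_measurableSpace hN.comap_le
          hm₂ hind (hind_meas k) (hG k), lintegral_indicator_one (hN (measurableSet_singleton k))]

theorem integral_sq_sum_range_poisson {Ω : Type*} {m₂ mΩ : MeasurableSpace Ω} {μ : Measure Ω}
    [IsProbabilityMeasure μ] {m : ℝ} (hm : 0 ≤ m) {N : Ω → ℕ} (hN : Measurable N)
    (hpois : ∀ k : ℕ, μ {ω | N ω = k} = ENNReal.ofReal (Real.exp (-m) * m ^ k / k !))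
    (hm₂ : m₂ ≤ mΩ) (hind : Indep (MeasurableSpace.comap N inferInstance) m₂ μ)
    {Y : ℕ → Ω → ℝ} (hYm : ∀ i, Measurable[m₂] (Y i))
    (hY : Pairwise fun i j => IndepFun (Y i) (Y j) μ) (hid : ∀ i, IdentDistrib (Y i) (Y 0) μ μ)
    (h2 : MemLp (Y 0) 2 μ) :
    Integrable (fun ω => (∑ i ∈ range (N ω), Y i ω) ^ 2) μ ∧
      ∫ ω, (∑ i ∈ range (N ω), Y i ω) ^ 2 ∂μ
        = m * ∫ ω, Y 0 ω ^ 2 ∂μ + m ^ 2 * (∫ ω, Y 0 ω ∂μ) ^ 2 := by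
  set a := ∫ ω, Y 0 ω ^ 2 ∂μ
  set e := ∫ ω, Y 0 ω ∂μ
  have ha : 0 ≤ a := integral_nonneg fun ω => sq_nonneg _
  have hp : ∀ k : ℕ, 0 ≤ Real.exp (-m) * m ^ k / k ! := fun k => by positivity
  have hgint : ∀ k, Integrable (fun ω => (∑ i ∈ range k, Y i ω) ^ 2) μ := fun k =>
    (memLp_finsetSum (range k) fun i _ => (hid i).symm.memLp_snd h2).integrable_sq
  have hmoments : HasSum
      (fun k : ℕ => Real.exp (-m) * m ^ k / k ! * (k * a + k.descFactorial 2 * e ^ 2))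
      (m * a + m ^ 2 * e ^ 2) := by
    have h := ((hasSum_descFactorial_mul_poisson m 1).mul_left a).add
      ((hasSum_descFactorial_mul_poisson m 2).mul_left (e ^ 2))
    rw [pow_one, mul_comm a, mul_comm (e ^ 2)] at h
    refine h.congr_fun fun k => ?_
    rw [Nat.descFactorial_one]
    ring
  have hlint : ∫⁻ ω, ENNReal.ofReal ((∑ i ∈ range (N ω), Y i ω) ^ 2) ∂μ
      = ENNReal.ofReal (m * a + m ^ 2 * e ^ 2) := by
    calc ∫⁻ ω, ENNReal.ofReal ((∑ i ∈ range (N ω), Y i ω) ^ 2) ∂μ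
        = ∑' k, μ (N ⁻¹' {k}) * ∫⁻ ω, ENNReal.ofReal ((∑ i ∈ range k, Y i ω) ^ 2) ∂μ :=
          lintegral_eval_eq_tsum_of_indep hN hm₂ hind fun k =>
            ((Finset.measurable_sum (range k) fun i _ => hYm i).pow_const 2).ennreal_ofReal
      _ = ∑' k : ℕ, ENNReal.ofReal
            (Real.exp (-m) * m ^ k / k ! * (k * a + k.descFactorial 2 * e ^ 2)) := by
          refine tsum_congr fun k => ?_
          rw [← ofReal_integral_eq_lintegral_ofReal (hgint k)
            (ae_of_all _ fun ω => sq_nonneg _), integral_sq_sum_range_of_identDistrib hY hid h2,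
            ENNReal.ofReal_mul (hp k), ← hpois k]
          rfl
      _ = ENNReal.ofReal (m * a + m ^ 2 * e ^ 2) := by
          rw [← ENNReal.ofReal_tsum_of_nonneg (fun k => by positivity) hmoments.summable,
            hmoments.tsum_eq]
  have hmeas : AEStronglyMeasurable (fun ω => (∑ i ∈ range (N ω), Y i ω) ^ 2) μ := by
    have hF : Measurable fun p : Ω × ℕ => (∑ i ∈ range p.2, Y i p.1) ^ 2 :=
      measurable_from_prod_countable_left fun k =>
        (Finset.measurable_sum (range k) fun i _ => (hYm i).mono hm₂ le_rfl).pow_const 2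
    exact (hF.comp (measurable_id.prodMk hN)).aestronglyMeasurable
  have hnonneg : 0 ≤ᵐ[μ] fun ω => (∑ i ∈ range (N ω), Y i ω) ^ 2 :=
    ae_of_all _ fun ω => sq_nonneg _
  refine ⟨⟨hmeas, (hasFiniteIntegral_iff_ofReal hnonneg).2 (hlint ▸ ENNReal.ofReal_lt_top)⟩, ?_⟩
  rw [integral_eq_lintegral_of_nonneg_ae hnonneg hmeas, hlint,
    ENNReal.toReal_ofReal (by positivity)]

theorem integral_sq_sum_range_norm_poisson {Ω E : Type*} [MeasurableSpace Ω] {μ : Measure Ω}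
    [IsProbabilityMeasure μ] [NormedAddCommGroup E] [MeasurableSpace E] [OpensMeasurableSpace E]
    {m : ℝ} (hm : 0 ≤ m) {N : Ω → ℕ} (hN : Measurable N)
    (hpois : ∀ k : ℕ, μ {ω | N ω = k} = ENNReal.ofReal (Real.exp (-m) * m ^ k / k !))
    {X : ℕ → Ω → E} (hXm : ∀ i, Measurable (X i))
    (hX : Pairwise fun i j => IndepFun (X i) (X j) μ) (hid : ∀ i, IdentDistrib (X i) (X 0) μ μ)
    (hind : Indep (MeasurableSpace.comap N inferInstance)
      (⨆ i, MeasurableSpace.comap (X i) inferInstance) μ)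
    (h2 : Integrable (fun ω => ‖X 0 ω‖ ^ 2) μ) :
    Integrable (fun ω => (∑ i ∈ range (N ω), ‖X i ω‖) ^ 2) μ ∧
      ∫ ω, (∑ i ∈ range (N ω), ‖X i ω‖) ^ 2 ∂μ
        = m * ∫ ω, ‖X 0 ω‖ ^ 2 ∂μ + m ^ 2 * (∫ ω, ‖X 0 ω‖ ∂μ) ^ 2 :=
  integral_sq_sum_range_poisson hm hN hpois (iSup_le fun i => (hXm i).comap_le) hind
    (fun i => measurable_norm.comp (Measurable.of_comap_le
      (le_iSup (fun i => MeasurableSpace.comap (X i) inferInstance) i)))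
    (fun _ _ hij => (hX hij).comp measurable_norm measurable_norm)
    (fun i => (hid i).comp measurable_norm)
    ((memLp_two_iff_integrable_sq (hXm 0).norm.aestronglyMeasurable).2 h2)

theorem tendsto_iSup_compl_of_tendsto_cofinite {ι : Type*} {f : ι → ℝ} (hf0 : 0 ≤ f)
    (hf : Filter.Tendsto f Filter.cofinite (nhds 0)) {J : ℕ → Finset ι} (hJ : Monotone J)
    (hcover : ∀ m, ∃ n, m ∈ J n) :
    Filter.Tendsto (fun n => ⨆ m : {m // m ∉ J n}, f m) Filter.atTop (nhds 0) := by
  refine tendsto_order.2 ⟨fun a ha => Filter.Eventually.of_forall fun n =>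
    ha.trans_le (Real.iSup_nonneg fun m => hf0 m), fun ε hε => ?_⟩
  obtain ⟨s, hs⟩ : ∃ s : Finset ι, ∀ m ∉ s, f m ≤ ε / 2 := by
    have := hf.eventually (ge_mem_nhds (half_pos hε))
    rw [Filter.eventually_cofinite] at this
    exact ⟨this.toFinset, fun m hm => by simpa using hm⟩
  have hsJ : ∀ᶠ n in Filter.atTop, s ⊆ J n := by
    simp only [Finset.subset_iff]
    exact (Filter.eventually_all_finset s).2 fun m _ =>
      Filter.eventually_atTop.2 ((hcover m).imp fun n hn n' hn' => hJ hn' hn)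
  filter_upwards [hsJ] with n hn
  exact (Real.iSup_le (fun m : {m // m ∉ J n} => hs m.1 fun h => m.2 (hn h))
    (half_pos hε).le).trans_lt (half_lt_self hε)

theorem stmt14_general {E : Type*} [NormedAddCommGroup E] [InnerProductSpace ℝ E] [CompleteSpace E]
    [MeasurableSpace E] [BorelSpace E]
    {Ω : Type*} [MeasurableSpace Ω] (μ : Measure Ω) [IsProbabilityMeasure μ]
    (b : HilbertBasis ℕ ℝ E) (c : E →L[ℝ] E) (Λ : ℕ → ℝ)
    (heig : ∀ j, c (b j) = Λ j • b j)
    (hΛ : Filter.Tendsto Λ Filter.atTop (nhds 0))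
    (J : ℕ → Finset ℕ) (hnest : ∀ n, J n ⊆ J (n + 1)) (hcover : ∀ m, ∃ n, m ∈ J n)
    (P : ℕ → E →L[ℝ] E) (hP : ∀ n x, P n x = ∑ j ∈ J n, ⟪x, b j⟫_ℝ • b j)
    (cn : ℕ → E →L[ℝ] E) (hcn : ∀ n, cn n = P n ∘L c ∘L P n)
    (lam T : ℝ) (hlam : 0 < lam) (hT : 0 < T)
    (τ : ℕ → Ω → ℝ) (hτpos : ∀ i ω, 0 < τ i ω)
    (hτmono : ∀ ω, StrictMono fun i => τ i ω) (hτmeas : ∀ i, Measurable (τ i))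
    (hfin : ∀ t : ℝ, ∀ᵐ ω ∂μ, {i : ℕ | τ i ω ≤ t}.Finite)
    (Nf : ℝ → Ω → ℕ) (hNf : ∀ t ω, Nf t ω = Set.ncard {i : ℕ | τ i ω ≤ t})
    (hpois : ∀ k : ℕ, μ {ω | Nf T ω = k}
        = ENNReal.ofReal (Real.exp (-(lam * T)) * (lam * T) ^ k / k.factorial))
    (X : ℕ → Ω → E) (hXmeas : ∀ i, Measurable (X i))
    (hident : ∀ i, IdentDistrib (X i) (X 0) μ μ)
    (hindep : iIndepFun X μ)
    (hNindep : Indep (MeasurableSpace.comap (Nf T) inferInstance)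
      (⨆ i, MeasurableSpace.comap (X i) inferInstance) μ)
    (hX2 : Integrable (fun ω => ‖X 0 ω‖ ^ 2) μ)
    (V₀ : Ω → E) (hV₀ : Integrable (fun ω => ‖V₀ ω‖ ^ 2) μ)
    (V : ℝ → Ω → E) (Vn : ℕ → ℝ → Ω → E)
    (hV : ∀ t ω, V t ω = (NormedSpace.exp (t • c)) (V₀ ω)
        + ∑ i ∈ Finset.range (Nf t ω), (NormedSpace.exp ((t - τ i ω) • c)) (X i ω))
    (hVn : ∀ n t ω, Vn n t ω = (NormedSpace.exp (t • cn n)) (V₀ ω)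
        + ∑ i ∈ Finset.range (Nf t ω), (NormedSpace.exp ((t - τ i ω) • cn n)) (X i ω)) :
    (∀ n : ℕ,
      (∫ ω, (⨆ t : Set.Icc (0:ℝ) T, ‖V t.1 ω - Vn n t.1 ω‖ ^ 2) ∂μ)
        ≤ (4 * T ^ 2 * Real.exp (2 * T * ‖c‖) *
            ((∫ ω, ‖V₀ ω‖ ^ 2 ∂μ) + lam * T * (∫ ω, ‖X 0 ω‖ ^ 2 ∂μ)
              + lam ^ 2 * T ^ 2 * (∫ ω, ‖X 0 ω‖ ∂μ) ^ 2))
          * ⨆ m : {m : ℕ // m ∉ J n}, Λ m.1 ^ 2) ∧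
    Filter.Tendsto
      (fun n => (4 * T ^ 2 * Real.exp (2 * T * ‖c‖) *
            ((∫ ω, ‖V₀ ω‖ ^ 2 ∂μ) + lam * T * (∫ ω, ‖X 0 ω‖ ^ 2 ∂μ)
              + lam ^ 2 * T ^ 2 * (∫ ω, ‖X 0 ω‖ ∂μ) ^ 2))
          * ⨆ m : {m : ℕ // m ∉ J n}, Λ m.1 ^ 2)
      Filter.atTop (nhds 0) := by
  have hNmeas : Measurable (Nf T) := funext (hNf T) ▸ measurable_ncard_setOf_le hτmeas T
  obtain ⟨hS2, hES2⟩ := integral_sq_sum_range_norm_poisson (mul_pos hlam hT).le hNmeas hpois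
    hXmeas (fun _ _ hij => hindep.indepFun hij) hident hNindep hX2
  simp only [hNf] at hS2 hES2
  refine ⟨fun n => ?_, ?_⟩
  · set K := ⨆ m : {m : ℕ // m ∉ J n}, Λ m.1 ^ 2
    have hK0 : 0 ≤ K := Real.iSup_nonneg fun m => sq_nonneg _
    have hop : ∀ s ∈ Set.Icc 0 T, ‖NormedSpace.exp (s • c) - NormedSpace.exp (s • cn n)‖
        ≤ T * √K * Real.exp (T * ‖c‖) := fun s hs => by
      refine (hcn n ▸ b.norm_exp_smul_sub_exp_smul_compress_le heig (J n) (hP n) s).trans ?_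
      rw [abs_of_nonneg hs.1]
      gcongr <;> exact hs.2
    calc _ ≤ 2 * (T * √K * Real.exp (T * ‖c‖)) ^ 2 * ((∫ ω, ‖V₀ ω‖ ^ 2 ∂μ)
            + ∫ ω, (∑ i ∈ range {i | τ i ω ≤ T}.ncard, ‖X i ω‖) ^ 2 ∂μ) := by
          simpa only [hV, hVn, hNf, shotNoise] using integral_iSup_sq_norm_shotNoise_sub_le hT.le
            hop hτpos (fun ω => (hτmono ω).monotone) (hfin T) hV₀ hS2
      _ = 2 * T ^ 2 * Real.exp (2 * T * ‖c‖) * ((∫ ω, ‖V₀ ω‖ ^ 2 ∂μ)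
            + lam * T * (∫ ω, ‖X 0 ω‖ ^ 2 ∂μ) + lam ^ 2 * T ^ 2 * (∫ ω, ‖X 0 ω‖ ∂μ) ^ 2) * K := by
          rw [hES2, mul_pow, mul_pow, Real.sq_sqrt hK0, ← Real.exp_nat_mul]
          push_cast
          ring_nf
      _ ≤ _ := by
          gcongr
          norm_num
  · simpa using (tendsto_iSup_compl_of_tendsto_cofinite (fun m => sq_nonneg (Λ m))
      (Nat.cofinite_eq_atTop ▸ by simpa using hΛ.pow 2) (monotone_nat_of_le_succ hnest)
      hcover).const_mul _

/-- Let `𝔠` be diagonal in an orthonormal basis `(E_j)` of `ℋ` with eigenvalues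
`Λ_j → 0`, `𝔠ⁿ = Π_n 𝔠 Π_n` the Galerkin approximations through nested exhausting finite sets
`J_n`, and let `V`, `Vⁿ` be the variance processes with the same initial value `V₀` and the same
driving compound Poisson process (`N(T)` Poisson with parameter `λT`, i.i.d. square-integrable
jumps independent of `N(T)`).  Then
`E[sup_{0≤t≤T} ‖V(t) − Vⁿ(t)‖²] ≤ C(T) sup_{m ∉ J_n} Λ_m²` with
`C(T) = 4T² e^{2T‖𝔠‖} (E‖V₀‖² + λT E‖X₁‖² + λ²T² (E‖X₁‖)²)`, and the right-hand side
converges to `0` as `n → ∞`. -/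
theorem stmt14 {E : Type*} [NormedAddCommGroup E] [InnerProductSpace ℝ E] [CompleteSpace E]
    [SecondCountableTopology E] [MeasurableSpace E] [BorelSpace E]
    {Ω : Type*} [MeasurableSpace Ω] (μ : Measure Ω) [IsProbabilityMeasure μ]
    (b : HilbertBasis ℕ ℝ E) (c : E →L[ℝ] E) (Λ : ℕ → ℝ)
    (heig : ∀ j, c (b j) = Λ j • b j)
    (hΛ : Filter.Tendsto Λ Filter.atTop (nhds 0))
    (J : ℕ → Finset ℕ) (hnest : ∀ n, J n ⊆ J (n + 1)) (hcover : ∀ m, ∃ n, m ∈ J n)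
    (P : ℕ → E →L[ℝ] E) (hP : ∀ n x, P n x = ∑ j ∈ J n, ⟪x, b j⟫_ℝ • b j)
    (cn : ℕ → E →L[ℝ] E) (hcn : ∀ n, cn n = P n ∘L c ∘L P n)
    (lam T : ℝ) (hlam : 0 < lam) (hT : 0 < T)
    (τ : ℕ → Ω → ℝ) (hτpos : ∀ i ω, 0 < τ i ω)
    (hτmono : ∀ ω, StrictMono fun i => τ i ω) (hτmeas : ∀ i, Measurable (τ i))
    (hfin : ∀ t : ℝ, ∀ᵐ ω ∂μ, {i : ℕ | τ i ω ≤ t}.Finite)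
    (Nf : ℝ → Ω → ℕ) (hNf : ∀ t ω, Nf t ω = Set.ncard {i : ℕ | τ i ω ≤ t})
    (hpois : ∀ k : ℕ, μ {ω | Nf T ω = k}
        = ENNReal.ofReal (Real.exp (-(lam * T)) * (lam * T) ^ k / k.factorial))
    (X : ℕ → Ω → E) (hXmeas : ∀ i, Measurable (X i))
    (hident : ∀ i, IdentDistrib (X i) (X 0) μ μ)
    (hindep : iIndepFun X μ)
    (hNindep : Indep (MeasurableSpace.comap (Nf T) inferInstance)
      (⨆ i, MeasurableSpace.comap (X i) inferInstance) μ)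
    (hX2 : Integrable (fun ω => ‖X 0 ω‖ ^ 2) μ)
    (V₀ : Ω → E) (hV₀ : Integrable (fun ω => ‖V₀ ω‖ ^ 2) μ)
    (V : ℝ → Ω → E) (Vn : ℕ → ℝ → Ω → E)
    (hV : ∀ t ω, V t ω = (NormedSpace.exp (t • c)) (V₀ ω)
        + ∑ i ∈ Finset.range (Nf t ω), (NormedSpace.exp ((t - τ i ω) • c)) (X i ω))
    (hVn : ∀ n t ω, Vn n t ω = (NormedSpace.exp (t • cn n)) (V₀ ω)
        + ∑ i ∈ Finset.range (Nf t ω), (NormedSpace.exp ((t - τ i ω) • cn n)) (X i ω)) :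
    (∀ n : ℕ,
      (∫ ω, (⨆ t : Set.Icc (0:ℝ) T, ‖V t.1 ω - Vn n t.1 ω‖ ^ 2) ∂μ)
        ≤ (4 * T ^ 2 * Real.exp (2 * T * ‖c‖) *
            ((∫ ω, ‖V₀ ω‖ ^ 2 ∂μ) + lam * T * (∫ ω, ‖X 0 ω‖ ^ 2 ∂μ)
              + lam ^ 2 * T ^ 2 * (∫ ω, ‖X 0 ω‖ ∂μ) ^ 2))
          * ⨆ m : {m : ℕ // m ∉ J n}, Λ m.1 ^ 2) ∧
    Filter.Tendsto
      (fun n => (4 * T ^ 2 * Real.exp (2 * T * ‖c‖) *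
            ((∫ ω, ‖V₀ ω‖ ^ 2 ∂μ) + lam * T * (∫ ω, ‖X 0 ω‖ ^ 2 ∂μ)
              + lam ^ 2 * T ^ 2 * (∫ ω, ‖X 0 ω‖ ∂μ) ^ 2))
          * ⨆ m : {m : ℕ // m ∉ J n}, Λ m.1 ^ 2)
      Filter.atTop (nhds 0) :=
  stmt14_general μ b c Λ heig hΛ J hnest hcover P hP cn hcn lam T hlam hT τ hτpos hτmono hτmeas hfin
    Nf hNf hpois X hXmeas hident hindep hNindep hX2 V₀ hV₀ V Vn hV hVn
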